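/- arXiv:1603.06210 — 6 statements merged into one kernel-verified Lean document; each statement's English description precedes it below -/
import Mathlib

section
/- Let f : ℝ → ℂ be a bounded function such that at every point x ∈ ℝ the one-sided limits f(x−) and f(x+) exist and are finite, and such that the limits lim_{x→−∞} f(x) and lim_{x→+∞} f(x) exist and are finite. Then for every ε > 0 there exist a function g : ℝ → ℂ and a finite set S ⊆ ℝ such that g is continuous at every point of ℝ ∖ S, g has finite one-sided limits at every point of S, g has finite limits at −∞ and +∞, and sup_{x∈ℝ} |f(x) − g(x)| ≤ 2ε. -/
/-! Choose `a` and `b` such that `f` is `ε`-close to its limit at `-∞` on `(-∞, a]` and to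
its limit at `+∞` on `[b, ∞)`. Every `x` has a neighbourhood `(l x, u x)` with `f` `ε`-close to
`f(x−)` on `(l x, x)` and to `f(x+)` on `(x, u x)`; finitely many of them cover `[a, b]`. Their
centres and endpoints, together with `a` and `b`, form a finite set `P` such that on every
interval avoiding `P` the function `f` is `ε`-close to a constant. Replacing `f` on each component
of `ℝ ∖ P` by its value at one point of that component gives a function `g` that is locally
constant off `P`, so it has all the required limits, and `‖f - g‖ ≤ 2ε` by the triangle
inequality. -/

open Filter Topology Set Metric

section ComponentRep

variable {X Y : Type*} [TopologicalSpace X] [Nonempty X] {F s : Set X} {x y : X}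
  {ι : Sort*} {p : ι → Prop} {t : ι → Set X}

open Classical in
noncomputable def componentRep (F : Set X) (x : X) : X :=
  if x ∈ F then Classical.epsilon (· ∈ connectedComponentIn F x) else x

theorem componentRep_mem_connectedComponentIn (hx : x ∈ F) :
    componentRep F x ∈ connectedComponentIn F x := by
  rw [componentRep, if_pos hx]
  exact Classical.epsilon_spec ⟨x, mem_connectedComponentIn hx⟩

theorem componentRep_of_notMem (hx : x ∉ F) : componentRep F x = x := if_neg hx

theorem IsPreconnected.componentRep_eq (hs : IsPreconnected s) (hsF : s ⊆ F) (hx : x ∈ s)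
    (hy : y ∈ s) : componentRep F y = componentRep F x := by
  rw [componentRep, componentRep, if_pos (hsF hx), if_pos (hsF hy),
    connectedComponentIn_eq (hs.subset_connectedComponentIn hx hsF hy)]

theorem Filter.HasBasis.exists_eventually_componentRep_eq {l : Filter X} (hl : l.HasBasis p t)
    (ht : ∀ i, p i → IsPreconnected (t i)) (hF : F ∈ l) :
    ∃ c, ∀ᶠ y in l, componentRep F y = c := by
  obtain ⟨i, hi, hiF⟩ := hl.mem_iff.1 hF
  obtain h | ⟨x, hx⟩ := (t i).eq_empty_or_nonempty
  · exact ⟨Classical.arbitrary X, mem_of_superset (hl.mem_of_mem hi) (h ▸ empty_subset _)⟩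
  · exact ⟨componentRep F x,
      mem_of_superset (hl.mem_of_mem hi) fun y hy => (ht i hi).componentRep_eq hiF hx hy⟩

theorem dist_comp_componentRep_le {E : Type*} [PseudoMetricSpace E] {f : X → E} {ε : ℝ}
    (hε : 0 ≤ ε)
    (hf : ∀ s ⊆ F, IsPreconnected s → s.Nonempty → ∃ c, MapsTo f s (closedBall c ε))
    (x : X) :
    dist (f x) (f (componentRep F x)) ≤ 2 * ε := by
  by_cases hx : x ∈ F
  · obtain ⟨c, hc⟩ := hf _ (connectedComponentIn_subset F x)
      isPreconnected_connectedComponentIn ⟨x, mem_connectedComponentIn hx⟩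
    calc dist (f x) (f (componentRep F x))
        ≤ dist (f x) c + dist (f (componentRep F x)) c := dist_triangle_right _ _ _
      _ ≤ ε + ε := add_le_add (hc (mem_connectedComponentIn hx))
          (hc (componentRep_mem_connectedComponentIn hx))
      _ = 2 * ε := (two_mul ε).symm
  · rw [componentRep_of_notMem hx, dist_self]
    positivity

variable [TopologicalSpace Y] (f : X → Y)

theorem Filter.HasBasis.exists_tendsto_comp_componentRep {l : Filter X} (hl : l.HasBasis p t)
    (ht : ∀ i, p i → IsPreconnected (t i)) (hF : F ∈ l) :
    ∃ c, Tendsto (f ∘ componentRep F) l (𝓝 c) := by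
  obtain ⟨c, hc⟩ := hl.exists_eventually_componentRep_eq ht hF
  exact ⟨f c, tendsto_nhds_of_eventually_eq (hc.mono fun y hy => congrArg f hy)⟩

theorem Filter.HasBasis.continuousAt_comp_componentRep (hl : (𝓝 x).HasBasis p t)
    (ht : ∀ i, p i → IsPreconnected (t i)) (hF : F ∈ 𝓝 x) :
    ContinuousAt (f ∘ componentRep F) x := by
  obtain ⟨c, hc⟩ := hl.exists_eventually_componentRep_eq ht hF
  exact tendsto_nhds_of_eventually_eq <| hc.mono fun y hy => by
    simp only [Function.comp_apply, hy, hc.self_of_nhds]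

end ComponentRep

section LinearOrder

variable {α : Type*} [LinearOrder α] {s : Set α} {p y : α}

theorem Set.OrdConnected.subset_Ioi_of_notMem (hs : s.OrdConnected) (hy : y ∈ s) (hp : p ∉ s)
    (hpy : p < y) : s ⊆ Ioi p :=
  fun _ hz => lt_of_not_ge fun hzp => hp (hs.out hz hy ⟨hzp, hpy.le⟩)

theorem Set.OrdConnected.subset_Iio_of_notMem (hs : s.OrdConnected) (hy : y ∈ s) (hp : p ∉ s)
    (hyp : y < p) : s ⊆ Iio p :=
  fun _ hz => lt_of_not_ge fun hpz => hp (hs.out hy hz ⟨hyp.le, hpz⟩)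

end LinearOrder

theorem exists_finite_forall_isPreconnected_mapsTo_closedBall {α E : Type*}
    [ConditionallyCompleteLinearOrder α] [TopologicalSpace α] [OrderTopology α]
    [NoMinOrder α] [NoMaxOrder α] [Nonempty α] [PseudoMetricSpace E]
    {f fm fp : α → E} {Lneg Lpos : E}
    (hfm : ∀ x, Tendsto f (𝓝[<] x) (𝓝 (fm x)))
    (hfp : ∀ x, Tendsto f (𝓝[>] x) (𝓝 (fp x)))
    (hLneg : Tendsto f atBot (𝓝 Lneg)) (hLpos : Tendsto f atTop (𝓝 Lpos))
    {ε : ℝ} (hε : 0 < ε) :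
    ∃ P : Set α, P.Finite ∧
      ∀ s ⊆ Pᶜ, IsPreconnected s → s.Nonempty → ∃ c, MapsTo f s (closedBall c ε) := by
  have hball (c : E) : closedBall c ε ∈ 𝓝 c := closedBall_mem_nhds c hε
  obtain ⟨a, ha⟩ := eventually_atBot.1 (hLneg (hball Lneg))
  obtain ⟨b, hb⟩ := eventually_atTop.1 (hLpos (hball Lpos))
  choose l hl hlf using fun x => mem_nhdsLT_iff_exists_Ioo_subset.1 (hfm x (hball (fm x)))
  choose u hu huf using fun x => mem_nhdsGT_iff_exists_Ioo_subset.1 (hfp x (hball (fp x)))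
  obtain ⟨t, ht⟩ := (isCompact_Icc (a := a) (b := b)).elim_finite_subcover
    (fun x => Ioo (l x) (u x)) (fun _ => isOpen_Ioo) fun x _ => mem_iUnion.2 ⟨x, hl x, hu x⟩
  set P : Set α := {a, b} ∪ ⋃ i ∈ t, {l i, i, u i}
  have hlP {i} (hi : i ∈ t) : l i ∈ P := mem_union_right _ (mem_biUnion hi (by simp))
  have hiP {i} (hi : i ∈ t) : i ∈ P := mem_union_right _ (mem_biUnion hi (by simp))
  have huP {i} (hi : i ∈ t) : u i ∈ P := mem_union_right _ (mem_biUnion hi (by simp))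
  refine ⟨P, (toFinite _).union (t.finite_toSet.biUnion fun _ _ => toFinite _),
    fun s hsP hs ⟨y, hy⟩ => ?_⟩
  have hPs {p} (hp : p ∈ P) : p ∉ s := fun h => hsP h hp
  have hIoi {p} (hp : p ∈ P) (hpy : p < y) : s ⊆ Ioi p :=
    hs.ordConnected.subset_Ioi_of_notMem hy (hPs hp) hpy
  have hIio {p} (hp : p ∈ P) (hyp : y < p) : s ⊆ Iio p :=
    hs.ordConnected.subset_Iio_of_notMem hy (hPs hp) hyp
  rcases lt_or_ge y a with hya | hay
  · exact ⟨Lneg, fun z hz => ha z (hIio (by simp [P]) hya hz).le⟩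
  rcases lt_or_ge b y with hby | hyb
  · exact ⟨Lpos, fun z hz => hb z (hIoi (by simp [P]) hby hz).le⟩
  obtain ⟨i, hi, hyi⟩ := mem_iUnion₂.1 (ht ⟨hay, hyb⟩)
  rcases lt_trichotomy y i with hlt | rfl | hgt
  · exact ⟨fm i, fun z hz => hlf i ⟨hIoi (hlP hi) hyi.1 hz, hIio (hiP hi) hlt hz⟩⟩
  · exact absurd hy (hPs (hiP hi))
  · exact ⟨fp i, fun z hz => huf i ⟨hIoi (hiP hi) hgt hz, hIio (huP hi) hyi.2 hz⟩⟩

theorem stmt_1_general (f : ℝ → ℂ)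
    (fm fp : ℝ → ℂ)
    (hfm : ∀ x : ℝ, Tendsto f (nhdsWithin x (Set.Iio x)) (𝓝 (fm x)))
    (hfp : ∀ x : ℝ, Tendsto f (nhdsWithin x (Set.Ioi x)) (𝓝 (fp x)))
    (Lneg Lpos : ℂ)
    (hLneg : Tendsto f atBot (𝓝 Lneg))
    (hLpos : Tendsto f atTop (𝓝 Lpos))
    (ε : ℝ) (hε : 0 < ε) :
    ∃ (g : ℝ → ℂ) (S : Set ℝ), S.Finite ∧
      (∀ x ∉ S, ContinuousAt g x) ∧
      (∀ x ∈ S, (∃ l : ℂ, Tendsto g (nhdsWithin x (Set.Iio x)) (𝓝 l)) ∧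
                (∃ l : ℂ, Tendsto g (nhdsWithin x (Set.Ioi x)) (𝓝 l))) ∧
      (∃ l : ℂ, Tendsto g atBot (𝓝 l)) ∧
      (∃ l : ℂ, Tendsto g atTop (𝓝 l)) ∧
      (∀ x : ℝ, ‖f x - g x‖ ≤ 2 * ε) := by
  obtain ⟨P, hPfin, hP⟩ :=
    exists_finite_forall_isPreconnected_mapsTo_closedBall hfm hfp hLneg hLpos hε
  have hPc : Pᶜ ∈ cofinite := hPfin.compl_mem_cofinite
  refine ⟨f ∘ componentRep Pᶜ, P, hPfin, fun x hx => ?_, fun x _ => ⟨?_, ?_⟩, ?_, ?_,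
    fun x => ?_⟩
  · exact (nhds_basis_Ioo x).continuousAt_comp_componentRep f (fun _ _ => isPreconnected_Ioo)
      (hPfin.isClosed.compl_mem_nhds hx)
  · exact (nhdsLT_basis x).exists_tendsto_comp_componentRep f (fun _ _ => isPreconnected_Ioo)
      (nhdsLT_le_nhdsNE x (nhdsNE_le_cofinite x hPc))
  · exact (nhdsGT_basis x).exists_tendsto_comp_componentRep f (fun _ _ => isPreconnected_Ioo)
      (nhdsGT_le_nhdsNE x (nhdsNE_le_cofinite x hPc))
  · exact atBot_basis.exists_tendsto_comp_componentRep f (fun _ _ => isPreconnected_Iic)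
      (atBot_le_cofinite hPc)
  · exact atTop_basis.exists_tendsto_comp_componentRep f (fun _ _ => isPreconnected_Ici)
      (atTop_le_cofinite hPc)
  · rw [← dist_eq_norm]
    exact dist_comp_componentRep_le hε.le hP x

/-- A bounded function `f : ℝ → ℂ` with finite one-sided limits everywhere and
finite limits at `±∞` can, for any `ε > 0`, be approximated within `2ε` (in sup norm) by a
function `g` which is continuous off a finite set `S`, has finite one-sided limits at the points
of `S`, and has finite limits at `±∞`. -/
theorem stmt_1 (f : ℝ → ℂ) (C : ℝ) (hbd : ∀ x : ℝ, ‖f x‖ ≤ C)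
    (fm fp : ℝ → ℂ)
    (hfm : ∀ x : ℝ, Tendsto f (nhdsWithin x (Set.Iio x)) (𝓝 (fm x)))
    (hfp : ∀ x : ℝ, Tendsto f (nhdsWithin x (Set.Ioi x)) (𝓝 (fp x)))
    (Lneg Lpos : ℂ)
    (hLneg : Tendsto f atBot (𝓝 Lneg))
    (hLpos : Tendsto f atTop (𝓝 Lpos))
    (ε : ℝ) (hε : 0 < ε) :
    ∃ (g : ℝ → ℂ) (S : Set ℝ), S.Finite ∧
      (∀ x ∉ S, ContinuousAt g x) ∧
      (∀ x ∈ S, (∃ l : ℂ, Tendsto g (nhdsWithin x (Set.Iio x)) (𝓝 l)) ∧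
                (∃ l : ℂ, Tendsto g (nhdsWithin x (Set.Ioi x)) (𝓝 l))) ∧
      (∃ l : ℂ, Tendsto g atBot (𝓝 l)) ∧
      (∃ l : ℂ, Tendsto g atTop (𝓝 l)) ∧
      (∀ x : ℝ, ‖f x - g x‖ ≤ 2 * ε) :=
  stmt_1_general f fm fp hfm hfp Lneg Lpos hLneg hLpos ε hε
end

section
/- Let 1 ≤ p < ∞, let B be a bounded operator on L^p(ℝ), let I be a finite index set, and let (E_k)_{k∈I} and (F_k)_{k∈I} be two families of measurable subsets of ℝ such that the sets E_k (k ∈ I) are pairwise disjoint and the sets F_k (k ∈ I) are pairwise disjoint. Then ‖Σ_{k∈I} M_{χ_{E_k}} ∘ B ∘ M_{χ_{F_k}}‖ ≤ ‖B‖ in the operator norm on L^p(ℝ). -/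
/-! For `u ∈ L^p` put `v k = B (χ_{F k} u)`. Since the `E k` are disjoint, the `p`-th power of the
norm is additive over the summands `χ_{E k} v k` (this is where `p < ∞` enters), so
`‖Σ χ_{E k} v k‖^p ≤ Σ ‖v k‖^p ≤ ‖B‖^p Σ ‖χ_{F k} u‖^p`, and since the `F k` are disjoint the last
sum is `∫_{⋃ F k} |u|^p ≤ ‖u‖^p`. -/

open MeasureTheory Filter Topology
open scoped ENNReal

noncomputable section

/-- The space `L^p(ℝ)` of complex-valued `p`-integrable functions on `ℝ`. -/
abbrev LpSp (p : ℝ≥0∞) := Lp ℂ p (volume : Measure ℝ)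

/-- Bounded operators on `L^p(ℝ)`. -/
abbrev OpSp (p : ℝ≥0∞) [Fact (1 ≤ p)] := LpSp p →L[ℂ] LpSp p

/-- `M` is the operator of multiplication by the function `a` on `L^p(ℝ)`. -/
def IsMulOp (p : ℝ≥0∞) [Fact (1 ≤ p)] (a : ℝ → ℂ) (M : OpSp p) : Prop :=
  ∀ u : LpSp p, (M u : ℝ → ℂ) =ᵐ[volume] fun x => a x * (u : ℝ → ℂ) x

open Function

theorem Set.apply_sum_indicator_of_pairwise_disjoint {α ι M N : Type*} [Fintype ι]
    [AddCommMonoid M] [AddCommMonoid N] {s : ι → Set α} {φ : M → N} (hφ : φ 0 = 0)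
    (hs : Pairwise (Disjoint on s)) (g : ι → α → M) (x : α) :
    φ (∑ k, (s k).indicator (g k) x) = ∑ k, (s k).indicator (fun y => φ (g k y)) x := by
  by_cases hx : ∃ j, x ∈ s j
  · obtain ⟨j, hj⟩ := hx
    have hxk : ∀ k ≠ j, x ∉ s k := fun k hk hxk => (hs hk).ne_of_mem hxk hj rfl
    rw [Finset.sum_eq_single_of_mem j (Finset.mem_univ j) fun k _ hk => by simp [hxk k hk],
      Finset.sum_eq_single_of_mem j (Finset.mem_univ j) fun k _ hk => by simp [hxk k hk]]
    simp [hj]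
  · simp only [not_exists] at hx
    simp [hx, hφ]

namespace MeasureTheory

variable {α E : Type*} [MeasurableSpace α] {μ : Measure α} [NormedAddCommGroup E] {q : ℝ}

theorem lintegral_rpow_enorm_indicator (hq : 0 < q) {t : Set α} (ht : MeasurableSet t)
    (g : α → E) : ∫⁻ x, ‖t.indicator g x‖ₑ ^ q ∂μ = ∫⁻ x in t, ‖g x‖ₑ ^ q ∂μ := by
  rw [← lintegral_indicator ht]
  congr 1 with x
  by_cases hx : x ∈ t <;> simp [hx, ENNReal.zero_rpow_of_pos hq]

variable {ι : Type*} [Fintype ι] {s : ι → Set α}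

theorem lintegral_rpow_enorm_sum_indicator (hq : 0 < q) (hs : Pairwise (Disjoint on s))
    (hsm : ∀ k, MeasurableSet (s k)) {g : ι → α → E} (hg : ∀ k, AEStronglyMeasurable (g k) μ) :
    ∫⁻ x, ‖∑ k, (s k).indicator (g k) x‖ₑ ^ q ∂μ = ∑ k, ∫⁻ x in s k, ‖g k x‖ₑ ^ q ∂μ := by
  have hφ : ‖(0 : E)‖ₑ ^ q = 0 := by simp [ENNReal.zero_rpow_of_pos hq]
  simp_rw [Set.apply_sum_indicator_of_pairwise_disjoint (φ := fun v : E => ‖v‖ₑ ^ q) hφ hs]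
  rw [lintegral_finsetSum' _ fun k _ => ((hg k).enorm.pow_const q).indicator (hsm k)]
  simp_rw [lintegral_indicator (hsm _)]

theorem sum_setLIntegral_le_lintegral (hs : Pairwise (Disjoint on s))
    (hsm : ∀ k, MeasurableSet (s k)) (f : α → ℝ≥0∞) :
    ∑ k, ∫⁻ x in s k, f x ∂μ ≤ ∫⁻ x, f x ∂μ := by
  calc ∑ k, ∫⁻ x in s k, f x ∂μ = ∫⁻ x in ⋃ k, s k, f x ∂μ := by
        rw [lintegral_iUnion hsm hs, tsum_fintype]
    _ ≤ ∫⁻ x, f x ∂μ := setLIntegral_le_lintegral _ _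

variable {p : ℝ≥0∞}

theorem Lp.enorm_rpow_eq_lintegral (hp0 : p ≠ 0) (hp : p ≠ ⊤) (f : Lp E p μ) :
    ‖f‖ₑ ^ p.toReal = ∫⁻ x, ‖f x‖ₑ ^ p.toReal ∂μ := by
  rw [Lp.enorm_def, eLpNorm_eq_lintegral_rpow_enorm_toReal hp0 hp, ← ENNReal.rpow_mul,
    one_div_mul_cancel (ENNReal.toReal_ne_zero.2 ⟨hp0, hp⟩), ENNReal.rpow_one]

theorem Lp.enorm_sum_rpow_le_of_ae_eq_indicator (hp0 : p ≠ 0) (hp : p ≠ ⊤)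
    (hs : Pairwise (Disjoint on s)) (hsm : ∀ k, MeasurableSet (s k)) {f g : ι → Lp E p μ}
    (hf : ∀ k, f k =ᵐ[μ] (s k).indicator (g k)) :
    ‖∑ k, f k‖ₑ ^ p.toReal ≤ ∑ k, ‖g k‖ₑ ^ p.toReal := by
  have hq : 0 < p.toReal := ENNReal.toReal_pos hp0 hp
  have hsum : ⇑(∑ k, f k) =ᵐ[μ] fun x => ∑ k, (s k).indicator (g k) x := by
    filter_upwards [Lp.coeFn_fun_finsetSum Finset.univ f, ae_all_iff.2 hf] with x hx hfx
    simp only [hx, hfx]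
  calc ‖∑ k, f k‖ₑ ^ p.toReal
      = ∫⁻ x, ‖∑ k, (s k).indicator (g k) x‖ₑ ^ p.toReal ∂μ := by
        rw [Lp.enorm_rpow_eq_lintegral hp0 hp]
        exact lintegral_congr_ae (hsum.fun_comp fun v => ‖v‖ₑ ^ p.toReal)
    _ = ∑ k, ∫⁻ x in s k, ‖g k x‖ₑ ^ p.toReal ∂μ :=
        lintegral_rpow_enorm_sum_indicator hq hs hsm fun k => Lp.aestronglyMeasurable (g k)
    _ ≤ ∑ k, ‖g k‖ₑ ^ p.toReal := by
        gcongr with k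
        rw [Lp.enorm_rpow_eq_lintegral hp0 hp]
        exact setLIntegral_le_lintegral _ _

theorem Lp.sum_enorm_rpow_le_of_ae_eq_indicator (hp0 : p ≠ 0) (hp : p ≠ ⊤)
    (hs : Pairwise (Disjoint on s)) (hsm : ∀ k, MeasurableSet (s k)) {f : ι → Lp E p μ}
    {g : Lp E p μ} (hf : ∀ k, f k =ᵐ[μ] (s k).indicator g) :
    ∑ k, ‖f k‖ₑ ^ p.toReal ≤ ‖g‖ₑ ^ p.toReal := by
  have hq : 0 < p.toReal := ENNReal.toReal_pos hp0 hp
  calc ∑ k, ‖f k‖ₑ ^ p.toReal = ∑ k, ∫⁻ x in s k, ‖g x‖ₑ ^ p.toReal ∂μ := by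
        refine Finset.sum_congr rfl fun k _ => ?_
        rw [Lp.enorm_rpow_eq_lintegral hp0 hp, ← lintegral_rpow_enorm_indicator hq (hsm k)]
        exact lintegral_congr_ae ((hf k).fun_comp fun v => ‖v‖ₑ ^ p.toReal)
    _ ≤ ∫⁻ x, ‖g x‖ₑ ^ p.toReal ∂μ := sum_setLIntegral_le_lintegral hs hsm _
    _ = ‖g‖ₑ ^ p.toReal := (Lp.enorm_rpow_eq_lintegral hp0 hp g).symm

end MeasureTheory

theorem IsMulOp.ae_eq_indicator {p : ℝ≥0∞} [Fact (1 ≤ p)] {t : Set ℝ} {M : OpSp p}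
    (hM : IsMulOp p (t.indicator fun _ => 1) M) (u : LpSp p) :
    M u =ᵐ[volume] t.indicator u :=
  (hM u).mono fun x hx => by by_cases hxt : x ∈ t <;> simp [hx, hxt]

/-- for a bounded operator `B` on `L^p(ℝ)`, `1 ≤ p < ∞`, and finite families
`(E k)`, `(F k)` of measurable sets, each pairwise disjoint, one has
`‖Σ_k χ_{E k} B χ_{F k}‖ ≤ ‖B‖`. -/
theorem stmt_3 (p : ℝ≥0∞) [Fact (1 ≤ p)] (hp : p ≠ ⊤)
    (B : OpSp p) (ι : Type) [Fintype ι]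
    (E F : ι → Set ℝ)
    (hEm : ∀ k, MeasurableSet (E k)) (hFm : ∀ k, MeasurableSet (F k))
    (hEdis : ∀ i j, i ≠ j → Disjoint (E i) (E j))
    (hFdis : ∀ i j, i ≠ j → Disjoint (F i) (F j))
    (ME MF : ι → OpSp p)
    (hME : ∀ k, IsMulOp p (Set.indicator (E k) fun _ => (1 : ℂ)) (ME k))
    (hMF : ∀ k, IsMulOp p (Set.indicator (F k) fun _ => (1 : ℂ)) (MF k)) :
    ‖∑ k : ι, ME k * B * MF k‖ ≤ ‖B‖ := by
  have hp0 : p ≠ 0 := (zero_lt_one.trans_le (Fact.out : 1 ≤ p)).ne'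
  have hq : 0 < p.toReal := ENNReal.toReal_pos hp0 hp
  refine ContinuousLinearMap.opNorm_le_bound _ (norm_nonneg B) fun u => ?_
  suffices ‖(∑ k, ME k * B * MF k) u‖ₑ ≤ ‖B‖ₑ * ‖u‖ₑ by
    rw [← ofReal_norm, ← ofReal_norm, ← ofReal_norm, ← ENNReal.ofReal_mul (norm_nonneg B)] at this
    exact (ENNReal.ofReal_le_ofReal_iff (by positivity)).1 this
  rw [← ENNReal.rpow_le_rpow_iff hq, ENNReal.mul_rpow_of_nonneg _ _ hq.le]
  calc ‖(∑ k, ME k * B * MF k) u‖ₑ ^ p.toReal = ‖∑ k, ME k (B (MF k u))‖ₑ ^ p.toReal := by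
        rw [sum_apply]; rfl
    _ ≤ ∑ k, ‖B (MF k u)‖ₑ ^ p.toReal :=
        Lp.enorm_sum_rpow_le_of_ae_eq_indicator hp0 hp (fun i j => hEdis i j) hEm
          fun k => (hME k).ae_eq_indicator _
    _ ≤ ∑ k, (‖B‖ₑ * ‖MF k u‖ₑ) ^ p.toReal := by
        gcongr with k
        exact B.le_opENorm _
    _ = ‖B‖ₑ ^ p.toReal * ∑ k, ‖MF k u‖ₑ ^ p.toReal := by
        simp only [ENNReal.mul_rpow_of_nonneg _ _ hq.le, Finset.mul_sum]
    _ ≤ ‖B‖ₑ ^ p.toReal * ‖u‖ₑ ^ p.toReal := by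
        gcongr
        exact Lp.sum_enorm_rpow_le_of_ae_eq_indicator hp0 hp (fun i j => hFdis i j) hFm
          fun k => (hMF k).ae_eq_indicator u
end
end

section
/- Let 1 < p < ∞, let q = p/(p−1) be the conjugate exponent, let u ∈ L^p(ℝ), and let m, n be real numbers with 0 < m < n. Then ∫_{−m}^{m} ( |∫_{−∞}^{−n} u(y)/(y−x) dy|^p + |∫_{n}^{∞} u(y)/(y−x) dy|^p ) dx ≤ 2 · (q−1)^{−p/q} · ln((n+m)/(n−m)) · ‖u‖_p^p. -/
/-!
For `|x| < n`, Hölder's inequality on `(n, ∞)` against the kernel `y ↦ (y - x)⁻¹`, whose `q`-th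
power integrates to `(n - x) ^ (1 - q) / (q - 1)`, bounds `|∫_n^∞ u y / (y - x) dy| ^ p` by
`(q - 1) ^ (-p/q) (n - x)⁻¹ ‖u‖_p ^ p`, since `(1 - q) p / q = -1`. The tail over `(-∞, -n]` is
the same tail for `y ↦ u (-y)` at `-x`. Integrating `(n + x)⁻¹ + (n - x)⁻¹` over `[-m, m]`
gives `2 log ((n + m) / (n - m))`.
-/

open MeasureTheory Set

lemma setIntegral_Ioi_comp_sub_right {E : Type*} [NormedAddCommGroup E] [NormedSpace ℝ E]
    (f : ℝ → E) (c x : ℝ) : ∫ y in Ioi c, f (y - x) = ∫ y in Ioi (c - x), f y := by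
  have h := (measurePreserving_sub_right volume x).setIntegral_preimage_emb
    (MeasurableEquiv.subRight x).measurableEmbedding f (Ioi (c - x))
  rwa [preimage_sub_const_Ioi, sub_add_cancel] at h

section InverseKernel

variable {q x c : ℝ}

lemma integrableOn_Ioi_inv_sub_rpow (hq : 1 < q) (hx : x < c) :
    IntegrableOn (fun y => (y - x)⁻¹ ^ q) (Ioi c) := by
  refine (integrableOn_add_rpow_Ioi_of_lt (a := -q) (m := -x) (by linarith) (by linarith)
    |>.congr_fun (fun y hy => ?_) measurableSet_Ioi)
  have hyx : 0 ≤ y - x := (sub_pos.2 (hx.trans hy)).le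
  dsimp only
  rw [← sub_eq_add_neg, Real.rpow_neg hyx, Real.inv_rpow hyx]

lemma integral_Ioi_inv_sub_rpow (hq : 1 < q) (hx : x < c) :
    ∫ y in Ioi c, (y - x)⁻¹ ^ q = (c - x) ^ (1 - q) / (q - 1) := by
  have hcx : 0 < c - x := sub_pos.2 hx
  rw [setIntegral_Ioi_comp_sub_right (fun y => y⁻¹ ^ q) c x,
    setIntegral_congr_fun measurableSet_Ioi fun y (hy : c - x < y) =>
      Real.inv_rpow (hcx.trans hy).le q,
    ← setIntegral_congr_fun measurableSet_Ioi fun y (hy : c - x < y) =>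
      Real.rpow_neg (hcx.trans hy).le q,
    integral_Ioi_rpow_of_lt (by linarith) hcx, neg_add_eq_sub, neg_div, ← div_neg, neg_sub]

lemma memLp_inv_sub_restrict_Ioi (hq : 1 < q) (hx : x < c) :
    MemLp (fun y : ℝ => (y - x)⁻¹) (ENNReal.ofReal q) (volume.restrict (Ioi c)) := by
  rw [← integrable_norm_rpow_iff (by fun_prop) (by simp; linarith) ENNReal.ofReal_ne_top,
    ENNReal.toReal_ofReal (by linarith)]
  refine (integrableOn_Ioi_inv_sub_rpow hq hx).congr_fun (fun y hy => ?_) measurableSet_Ioi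
  rw [Real.norm_of_nonneg (inv_nonneg.2 (sub_pos.2 (hx.trans hy)).le)]

end InverseKernel

section TailIntegral

variable {p q x c : ℝ} {v : ℝ → ℂ}

lemma norm_setIntegral_Ioi_div_sub_le (hpq : p.HolderConjugate q)
    (hv : MemLp v (ENNReal.ofReal p)) (hx : x < c) :
    ‖∫ y in Ioi c, v y / (y - x)‖ ≤
      (∫ y, ‖v y‖ ^ p) ^ (1 / p) * ((c - x) ^ (1 - q) / (q - 1)) ^ (1 / q) := by
  have hpos : ∀ y ∈ Ioi c, 0 < y - x := fun y hy => sub_pos.2 (hx.trans hy)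
  calc ‖∫ y in Ioi c, v y / (y - x)‖
      ≤ ∫ y in Ioi c, ‖v y‖ * (y - x)⁻¹ := by
        refine (norm_integral_le_integral_norm _).trans_eq
          (setIntegral_congr_fun measurableSet_Ioi fun y hy => ?_)
        rw [norm_div, ← Complex.ofReal_sub, Complex.norm_real, Real.norm_of_nonneg (hpos y hy).le,
          div_eq_mul_inv]
    _ ≤ (∫ y in Ioi c, ‖v y‖ ^ p) ^ (1 / p) * (∫ y in Ioi c, (y - x)⁻¹ ^ q) ^ (1 / q) :=
        integral_mul_le_Lp_mul_Lq_of_nonneg hpq (ae_of_all _ fun _ => norm_nonneg _)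
          ((ae_restrict_iff' measurableSet_Ioi).2
            (ae_of_all _ fun y hy => (inv_pos.2 (hpos y hy)).le))
          (hv.restrict _).norm (memLp_inv_sub_restrict_Ioi hpq.symm.lt hx)
    _ ≤ _ := by
        rw [integral_Ioi_inv_sub_rpow hpq.symm.lt hx]
        have hcx : 0 < c - x := sub_pos.2 hx
        have hq : 0 < q - 1 := hpq.symm.sub_one_pos
        gcongr ?_ ^ _ * _
        · exact hpq.one_div_nonneg
        · refine setIntegral_le_integral ?_ (ae_of_all _ fun _ => by positivity)
          simpa [hpq.nonneg] using
            hv.integrable_norm_rpow (by simpa using hpq.pos) ENNReal.ofReal_ne_top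

lemma norm_setIntegral_Ioi_div_sub_rpow_le (hpq : p.HolderConjugate q)
    (hv : MemLp v (ENNReal.ofReal p)) (hx : x < c) :
    ‖∫ y in Ioi c, v y / (y - x)‖ ^ p ≤ (q - 1) ^ (-(p / q)) * (c - x)⁻¹ * ∫ y, ‖v y‖ ^ p := by
  have hcx : 0 < c - x := sub_pos.2 hx
  have hq : 0 < q - 1 := hpq.symm.sub_one_pos
  have hI : 0 ≤ ∫ y, ‖v y‖ ^ p := integral_nonneg fun _ => by positivity
  have hexp : (1 - q) * (p / q) = -1 := by
    rw [hpq.div_conj_eq_sub_one]; linear_combination -hpq.mul_eq_add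
  calc ‖∫ y in Ioi c, v y / (y - x)‖ ^ p
      ≤ ((∫ y, ‖v y‖ ^ p) ^ (1 / p) * ((c - x) ^ (1 - q) / (q - 1)) ^ (1 / q)) ^ p :=
        Real.rpow_le_rpow (norm_nonneg _) (norm_setIntegral_Ioi_div_sub_le hpq hv hx) hpq.nonneg
    _ = (q - 1) ^ (-(p / q)) * (c - x)⁻¹ * ∫ y, ‖v y‖ ^ p := by
        rw [Real.mul_rpow (by positivity) (by positivity), ← Real.rpow_mul hI,
          ← Real.rpow_mul (by positivity), one_div_mul_cancel hpq.ne_zero, Real.rpow_one,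
          one_div_mul_eq_div, Real.div_rpow (by positivity) hq.le, ← Real.rpow_mul hcx.le, hexp,
          Real.rpow_neg_one, Real.rpow_neg hq.le]
        ring

end TailIntegral

lemma norm_setIntegral_Iic_div_sub (v : ℝ → ℂ) (n x : ℝ) :
    ‖∫ y in Iic (-n), v y / (y - x)‖ = ‖∫ y in Ioi n, v (-y) / (y - -x)‖ := by
  rw [← integral_comp_neg_Ioi, ← norm_neg, ← integral_neg]
  congr 2 with y
  rw [← div_neg]
  push_cast
  ring

lemma norm_tails_rpow_le {p q x n : ℝ} {v : ℝ → ℂ} (hpq : p.HolderConjugate q)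
    (hv : MemLp v (ENNReal.ofReal p)) (hxn : |x| < n) :
    ‖∫ y in Iic (-n), v y / (y - x)‖ ^ p + ‖∫ y in Ici n, v y / (y - x)‖ ^ p ≤
      (q - 1) ^ (-(p / q)) * ((n + x)⁻¹ + (n - x)⁻¹) * ∫ y, ‖v y‖ ^ p := by
  obtain ⟨hnx, hxn⟩ := abs_lt.1 hxn
  have hleft := norm_setIntegral_Ioi_div_sub_rpow_le (v := fun y => v (-y)) hpq
    (hv.comp_measurePreserving (Measure.measurePreserving_neg volume)) (neg_lt.1 hnx)
  rw [integral_neg_eq_self (fun y => ‖v y‖ ^ p), sub_neg_eq_add, Complex.ofReal_neg] at hleft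
  have hright := norm_setIntegral_Ioi_div_sub_rpow_le hpq hv hxn
  rw [norm_setIntegral_Iic_div_sub, integral_Ici_eq_integral_Ioi]
  linarith

lemma continuousOn_inv_add_add_inv_sub {m n : ℝ} (hmn : m < n) :
    ContinuousOn (fun x => (n + x)⁻¹ + (n - x)⁻¹) (Icc (-m) m) := by
  refine (ContinuousOn.inv₀ (by fun_prop) fun x hx => ?_).add
    (ContinuousOn.inv₀ (by fun_prop) fun x hx => ?_)
  · linarith [hx.1]
  · linarith [hx.2]

lemma integral_Icc_inv_add_add_inv_sub {m n : ℝ} (hm : 0 ≤ m) (hmn : m < n) :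
    ∫ x in Icc (-m) m, ((n + x)⁻¹ + (n - x)⁻¹) = 2 * Real.log ((n + m) / (n - m)) := by
  have hpos : ∀ x ∈ uIcc (-m) m, 0 < n + x ∧ 0 < n - x := by
    intro x hx
    rw [uIcc_of_le (by linarith)] at hx
    constructor <;> linarith [hx.1, hx.2]
  rw [integral_Icc_eq_integral_Ioc, ← intervalIntegral.integral_of_le (by linarith),
    intervalIntegral.integral_add
      (intervalIntegral.intervalIntegrable_inv (fun x hx => (hpos x hx).1.ne') (by fun_prop))
      (intervalIntegral.intervalIntegrable_inv (fun x hx => (hpos x hx).2.ne') (by fun_prop)),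
    intervalIntegral.integral_comp_add_left (fun t => t⁻¹),
    intervalIntegral.integral_comp_sub_left (fun t => t⁻¹),
    integral_inv_of_pos (by linarith) (by linarith),
    integral_inv_of_pos (by linarith) (by linarith), sub_neg_eq_add, ← sub_eq_add_neg, two_mul]

lemma MeasureTheory.Lp.norm_rpow_eq_integral {α E : Type*} [MeasurableSpace α] {μ : Measure α}
    [NormedAddCommGroup E] {p : ℝ} (hp : 0 < p) (u : Lp E (ENNReal.ofReal p) μ) :
    ‖u‖ ^ p = ∫ x, ‖u x‖ ^ p ∂μ := by
  rw [Lp.norm_def, toReal_eLpNorm (Lp.aestronglyMeasurable u),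
    lpNorm_eq_integral_norm_rpow_toReal (by simpa using hp) ENNReal.ofReal_ne_top
      (Lp.aestronglyMeasurable u), ENNReal.toReal_ofReal hp.le,
    ← Real.rpow_mul (integral_nonneg fun _ => by positivity), inv_mul_cancel₀ hp.ne',
    Real.rpow_one]

theorem stmt_5_general (p : ℝ) (hp : 1 < p)
    (q : ℝ) (hq : q = p / (p - 1))
    (u : Lp ℂ (ENNReal.ofReal p) (volume : Measure ℝ))
    (m n : ℝ) (hm : 0 < m) (hmn : m < n) :
    (∫ x in Set.Icc (-m) m,
        (‖∫ y in Set.Iic (-n), (u : ℝ → ℂ) y / ((y : ℂ) - (x : ℂ))‖ ^ p +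
         ‖∫ y in Set.Ici n, (u : ℝ → ℂ) y / ((y : ℂ) - (x : ℂ))‖ ^ p)) ≤
      2 * (q - 1) ^ (-(p / q)) * Real.log ((n + m) / (n - m)) * ‖u‖ ^ p := by
  have hpq : p.HolderConjugate q := (Real.holderConjugate_iff_eq_conjExponent hp).2 hq
  calc _ ≤ ∫ x in Icc (-m) m,
          (q - 1) ^ (-(p / q)) * ((n + x)⁻¹ + (n - x)⁻¹) * ∫ y, ‖u y‖ ^ p := by
        refine integral_mono_of_nonneg (ae_of_all _ fun _ => by positivity)
          ((continuousOn_const.mul (continuousOn_inv_add_add_inv_sub hmn)).mul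
            continuousOn_const |>.integrableOn_Icc)
          ((ae_restrict_iff' measurableSet_Icc).2 (ae_of_all _ fun x hx => ?_))
        exact norm_tails_rpow_le hpq (Lp.memLp u) ((abs_le.2 hx).trans_lt hmn)
    _ = _ := by
        rw [integral_mul_const, integral_const_mul, integral_Icc_inv_add_add_inv_sub hm.le hmn,
          Lp.norm_rpow_eq_integral hpq.pos]
        ring

/-- for `1 < p < ∞`, `q = p/(p-1)`, `u ∈ L^p(ℝ)` and `0 < m < n`,
`∫_{-m}^m ( |∫_{-∞}^{-n} u(y)/(y-x) dy|^p + |∫_n^∞ u(y)/(y-x) dy|^p ) dx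
  ≤ 2 (q-1)^{-p/q} ln((n+m)/(n-m)) ‖u‖_p^p`. -/
theorem stmt_5 (p : ℝ) (hp : 1 < p) [Fact (1 ≤ ENNReal.ofReal p)]
    (q : ℝ) (hq : q = p / (p - 1))
    (u : Lp ℂ (ENNReal.ofReal p) (volume : Measure ℝ))
    (m n : ℝ) (hm : 0 < m) (hmn : m < n) :
    (∫ x in Set.Icc (-m) m,
        (‖∫ y in Set.Iic (-n), (u : ℝ → ℂ) y / ((y : ℂ) - (x : ℂ))‖ ^ p +
         ‖∫ y in Set.Ici n, (u : ℝ → ℂ) y / ((y : ℂ) - (x : ℂ))‖ ^ p)) ≤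
      2 * (q - 1) ^ (-(p / q)) * Real.log ((n + m) / (n - m)) * ‖u‖ ^ p :=
  stmt_5_general p hp q hq u m n hm hmn
end

section
/- Let 1 < p < ∞ and let S be a bounded operator on L^p(ℝ) with the following property: for every u ∈ L^p(ℝ) and every open set V ⊆ ℝ on which u vanishes almost everywhere, one has (S u)(x) = (1/(π i)) ∫_ℝ u(y)/(y − x) dy for almost every x ∈ V. Then for every m ∈ ℕ, ‖P_m ∘ S ∘ Q_n‖ → 0 and ‖Q_n ∘ S ∘ P_m‖ → 0 as n → ∞, in the operator norm on L^p(ℝ). (In particular, the Cauchy singular integral operator S belongs to the algebra L(L^p(ℝ), P).) -/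
open MeasureTheory Filter Topology
open scoped ENNReal

noncomputable section

/-! If `u` vanishes near a point, `S u` is given there by the Cauchy integral, and for
`|x| ≤ m ≤ |y| - 1` the kernel obeys `|y - x|⁻¹ ≤ (m + 2) (1 + |y|)⁻¹`. Hence, by Hölder,
`(S Q_n u)(x)` for `|x| ≤ m` is at most `‖u‖_p` times the `L^q` norm of `(1 + |y|)⁻¹` on
`|y| > n`, and `(S P_m u)(x)` for `|x| > n` is at most a multiple of `‖u‖_p (1 + |x|)⁻¹`, whose
`L^p` norm on `|x| > n` is again such a tail. As `(1 + |x|)⁻¹ ∈ L^r` for every `1 < r < ∞`,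
both tails (`r = q` and `r = p`) tend to zero. -/

open Set

theorem enorm_integral_le_eLpNorm_mul_eLpNorm {α E F : Type*} [MeasurableSpace α]
    {μ : Measure α} [NormedAddCommGroup E] [NormedSpace ℝ E] [NormedAddCommGroup F]
    {p q : ℝ≥0∞} [p.HolderConjugate q] {G : α → E} {f : α → F} {g : α → ℝ}
    (hf : AEStronglyMeasurable f μ) (hg : AEStronglyMeasurable g μ)
    (hG : ∀ᵐ x ∂μ, ‖G x‖ ≤ ‖f x‖ * g x) :
    ‖∫ x, G x ∂μ‖ₑ ≤ eLpNorm f p μ * eLpNorm g q μ := by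
  calc ‖∫ x, G x ∂μ‖ₑ ≤ ∫⁻ x, ‖G x‖ₑ ∂μ := enorm_integral_le_lintegral_enorm G
    _ ≤ eLpNorm (fun x => ‖f x‖ * g x) 1 μ := by
        rw [eLpNorm_one_eq_lintegral_enorm]
        refine lintegral_mono_ae (hG.mono fun x hx => ?_)
        exact enorm_le_iff_norm_le.2 (hx.trans (Real.le_norm_self _))
    _ ≤ 1 * eLpNorm f p μ * eLpNorm g q μ :=
        eLpNorm_le_eLpNorm_mul_eLpNorm'_of_norm hf hg (fun a b => ‖a‖ * b) 1
          (ae_of_all _ fun x => by simp)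
    _ = eLpNorm f p μ * eLpNorm g q μ := by simp

theorem tendsto_eLpNorm_indicator_of_antitone {α E : Type*} [MeasurableSpace α]
    {μ : Measure α} [NormedAddCommGroup E] {p : ℝ≥0∞} {f : α → E} (hf : MemLp f p μ)
    (hp : p ≠ ∞) {s : ℕ → Set α} (hs : ∀ n, MeasurableSet (s n)) (hanti : Antitone s)
    (hempty : ⋂ n, s n = ∅) :
    Tendsto (fun n => eLpNorm ((s n).indicator f) p μ) atTop (𝓝 0) := by
  rcases eq_or_ne p 0 with rfl | hp0
  · simp
  set ν := μ.withDensity fun x => ‖f x‖ₑ ^ p.toReal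
  have hνs : ∀ n, eLpNorm ((s n).indicator f) p μ = ν (s n) ^ (1 / p.toReal) := fun n => by
    rw [eLpNorm_indicator_eq_eLpNorm_restrict (hs n), eLpNorm_eq_lintegral_rpow_enorm_toReal hp0 hp,
      withDensity_apply _ (hs n)]
  have hν_fin : ν (s 0) ≠ ∞ := by
    rw [withDensity_apply _ (hs 0)]
    exact (setLIntegral_le_lintegral _ _).trans_lt
      (lintegral_rpow_enorm_lt_top_of_eLpNorm_lt_top hp0 hp hf.eLpNorm_lt_top) |>.ne
  have hν : Tendsto (fun n => ν (s n)) atTop (𝓝 0) := by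
    simpa [hempty, Function.comp_def] using
      tendsto_measure_iInter_atTop (fun n => (hs n).nullMeasurableSet) hanti ⟨0, hν_fin⟩
  have hcont := (ENNReal.continuous_rpow_const (y := 1 / p.toReal)).tendsto 0
  rw [ENNReal.zero_rpow_of_pos (by simp [ENNReal.toReal_pos hp0 hp])] at hcont
  exact (hcont.comp hν).congr fun n => (hνs n).symm

theorem memLp_inv_one_add_abs {r : ℝ≥0∞} (hr : 1 < r) (hr_top : r ≠ ∞) :
    MemLp (fun x : ℝ => (1 + |x|)⁻¹) r volume := by
  have hr0 : r ≠ 0 := (zero_lt_one.trans hr).ne'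
  refine (integrable_norm_rpow_iff (by fun_prop) hr0 hr_top).1 ?_
  have h1 : (1 : ℝ) < r.toReal := by
    simpa using (ENNReal.toReal_lt_toReal ENNReal.one_ne_top hr_top).2 hr
  convert integrable_one_add_norm (E := ℝ) (μ := volume) (r := r.toReal) (by simpa using h1)
    using 2 with x
  rw [Real.norm_eq_abs, abs_of_pos (by positivity), Real.inv_rpow (by positivity),
    Real.rpow_neg (by positivity), Real.norm_eq_abs]

def tailNorm (r : ℝ≥0∞) (n : ℕ) : ℝ≥0∞ :=
  eLpNorm ((Icc (-(n : ℝ)) n)ᶜ.indicator fun x : ℝ => (1 + |x|)⁻¹) r volume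

theorem tendsto_tailNorm {r : ℝ≥0∞} (hr : 1 < r) (hr_top : r ≠ ∞) :
    Tendsto (tailNorm r) atTop (𝓝 0) := by
  refine tendsto_eLpNorm_indicator_of_antitone (memLp_inv_one_add_abs hr hr_top) hr_top
    (fun n => measurableSet_Icc.compl) (fun a b hab => compl_subset_compl.2 ?_) ?_
  · exact Icc_subset_Icc (by simpa using hab) (by simpa using hab)
  · refine eq_empty_iff_forall_notMem.2 fun x hx => ?_
    obtain ⟨n, hn⟩ := exists_nat_ge |x|
    exact mem_iInter.1 hx n (abs_le.1 hn)

theorem inv_abs_sub_le {a b m : ℝ} (hm : 0 ≤ m) (ha : |a| ≤ m) (hb : m + 1 ≤ |b|) :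
    |b - a|⁻¹ ≤ (m + 2) * (1 + |b|)⁻¹ := by
  have hba : |b| - m ≤ |b - a| := by linarith [abs_sub_abs_le_abs_sub b a]
  have hpos : 0 < |b| - m := by linarith
  calc |b - a|⁻¹ ≤ (|b| - m)⁻¹ := inv_anti₀ hpos hba
    _ ≤ (m + 2) * (1 + |b|)⁻¹ := by
        rw [← div_eq_mul_inv, le_div_iff₀ (by positivity), inv_mul_le_iff₀ hpos]
        nlinarith

theorem lt_abs_of_notMem_Icc {a b : ℝ} (hb : b ∉ Icc (-a) a) : a < |b| :=
  not_le.1 fun h => hb (abs_le.1 h)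

/-- No principal value is taken: the integral is only evaluated at points away from the support
of `u`, where it converges absolutely. -/
def cauchySingularIntegral (u : ℝ → ℂ) (x : ℝ) : ℂ :=
  (1 / ((Real.pi : ℂ) * Complex.I)) * ∫ y : ℝ, u y / ((y : ℂ) - (x : ℂ))

def IsCauchySingularOffSupport (p : ℝ≥0∞) [Fact (1 ≤ p)] (S : OpSp p) : Prop :=
  ∀ (u : LpSp p) (V : Set ℝ), IsOpen V → (u : ℝ → ℂ) =ᵐ[volume.restrict V] 0 →
    ∀ᵐ x ∂(volume.restrict V), (S u : ℝ → ℂ) x = cauchySingularIntegral u x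

theorem enorm_cauchySingularIntegral_le {p q : ℝ≥0∞} [p.HolderConjugate q] {f : ℝ → ℂ}
    {w : ℝ → ℝ} {x : ℝ} (hf : AEStronglyMeasurable f volume)
    (hw : AEStronglyMeasurable w volume) (hfw : ∀ᵐ y, f y ≠ 0 → |y - x|⁻¹ ≤ w y) :
    ‖cauchySingularIntegral f x‖ₑ ≤ eLpNorm f p volume * eLpNorm w q volume := by
  have hc : ‖1 / ((Real.pi : ℂ) * Complex.I)‖ₑ ≤ 1 := by
    rw [← ofReal_norm, ENNReal.ofReal_le_one]
    simp only [one_div, norm_inv, norm_mul, Complex.norm_real, Real.norm_eq_abs,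
      abs_of_pos Real.pi_pos, Complex.norm_I, mul_one]
    exact inv_le_one_of_one_le₀ (by linarith [Real.pi_gt_three])
  have hint : ∀ᵐ y, ‖f y / ((y : ℂ) - x)‖ ≤ ‖f y‖ * w y := by
    filter_upwards [hfw] with y hy
    rcases eq_or_ne (f y) 0 with h0 | h0
    · simp [h0]
    · rw [norm_div, ← Complex.ofReal_sub, Complex.norm_real, Real.norm_eq_abs, div_eq_mul_inv]
      exact mul_le_mul_of_nonneg_left (hy h0) (norm_nonneg _)
  calc ‖cauchySingularIntegral f x‖ₑ
      ≤ 1 * ‖∫ y : ℝ, f y / ((y : ℂ) - (x : ℂ))‖ₑ := by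
        rw [cauchySingularIntegral, enorm_mul]
        gcongr
    _ ≤ eLpNorm f p volume * eLpNorm w q volume := by
        rw [one_mul]
        exact enorm_integral_le_eLpNorm_mul_eLpNorm hf hw hint

theorem IsMulOp.coeFn_eq_indicator {p : ℝ≥0∞} [Fact (1 ≤ p)] {s : Set ℝ} {M : OpSp p}
    (hM : IsMulOp p (s.indicator fun _ => 1) M) (u : LpSp p) :
    (M u : ℝ → ℂ) =ᵐ[volume] s.indicator u := by
  filter_upwards [hM u] with x hx
  by_cases hxs : x ∈ s <;> simp [hx, hxs]

theorem IsMulOp.coeFn_one_sub_eq_indicator {p : ℝ≥0∞} [Fact (1 ≤ p)] {s : Set ℝ} {M : OpSp p}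
    (hM : IsMulOp p (s.indicator fun _ => 1) M) (u : LpSp p) :
    ((1 - M) u : ℝ → ℂ) =ᵐ[volume] sᶜ.indicator u := by
  rw [sub_apply, one_apply_eq_self]
  filter_upwards [Lp.coeFn_sub u (M u), hM.coeFn_eq_indicator u] with x hsub hx
  rw [hsub, Pi.sub_apply, hx, indicator_compl, Pi.sub_apply]

theorem tendsto_opNorm_zero_of_eLpNorm_le {ι 𝕜 α E F : Type*} [NontriviallyNormedField 𝕜]
    [MeasurableSpace α] {μ : Measure α} [NormedAddCommGroup E] [NormedSpace 𝕜 E]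
    [NormedAddCommGroup F] [NormedSpace 𝕜 F] {p : ℝ≥0∞} [Fact (1 ≤ p)] {l : Filter ι}
    {T : ι → Lp E p μ →L[𝕜] Lp F p μ} {c : ι → ℝ≥0∞} (hc : Tendsto c l (𝓝 0))
    (hT : ∀ᶠ i in l, ∀ u, eLpNorm (T i u) p μ ≤ c i * eLpNorm u p μ) :
    Tendsto (fun i => ‖T i‖) l (𝓝 0) := by
  refine squeeze_zero' (Eventually.of_forall fun i => norm_nonneg _) ?_
    (by simpa using (ENNReal.tendsto_toReal ENNReal.zero_ne_top).comp hc)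
  filter_upwards [hT, hc.eventually (eventually_lt_nhds ENNReal.zero_lt_top)] with i hTi hci
  refine ContinuousLinearMap.opNorm_le_bound _ ENNReal.toReal_nonneg fun u => ?_
  rw [Function.comp_apply, Lp.norm_def, Lp.norm_def, ← ENNReal.toReal_mul]
  exact ENNReal.toReal_mono (ENNReal.mul_ne_top hci.ne (Lp.eLpNorm_ne_top u)) (hTi u)

section Cutoffs

variable {p q : ℝ≥0∞} [Fact (1 ≤ p)] [p.HolderConjugate q] {S : OpSp p}
  {M N : OpSp p} {m n : ℕ}

theorem eLpNorm_P_S_Q_apply_le (hS : IsCauchySingularOffSupport p S)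
    (hM : IsMulOp p ((Icc (-(m : ℝ)) m).indicator fun _ => 1) M)
    (hN : IsMulOp p ((Icc (-(n : ℝ)) n).indicator fun _ => 1) N) (hmn : m + 1 ≤ n)
    (u : LpSp p) :
    eLpNorm (M (S ((1 - N) u)) : ℝ → ℂ) p volume ≤
      ‖(m + 2 : ℝ)‖ₑ * volume (Icc (-(m : ℝ)) m) ^ (1 / p.toReal) * tailNorm q n *
        eLpNorm u p volume := by
  have hmn' : (m : ℝ) + 1 ≤ n := by exact_mod_cast hmn
  set v := (1 - N) u
  have hv : (v : ℝ → ℂ) =ᵐ[volume] (Icc (-(n : ℝ)) n)ᶜ.indicator u :=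
    hN.coeFn_one_sub_eq_indicator u
  have hv_Ioo : (v : ℝ → ℂ) =ᵐ[volume.restrict (Ioo (-(n : ℝ)) n)] 0 := by
    have h := indicator_ae_eq_restrict_compl (μ := volume) (f := (u : ℝ → ℂ))
      (measurableSet_Icc (a := -(n : ℝ)) (b := n)).compl
    rw [compl_compl] at h
    exact EventuallyEq.trans (ae_restrict_of_ae hv)
      (ae_restrict_of_ae_restrict_of_subset Ioo_subset_Icc_self h)
  have hSv : ∀ᵐ x, x ∈ Icc (-(m : ℝ)) m → (S v : ℝ → ℂ) x = cauchySingularIntegral v x := by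
    filter_upwards [(ae_restrict_iff' measurableSet_Ioo).1 (hS v _ isOpen_Ioo hv_Ioo)]
      with x hx hxm
    exact hx ⟨by linarith [hxm.1], by linarith [hxm.2]⟩
  set w : ℝ → ℝ := (m + 2 : ℝ) • (Icc (-(n : ℝ)) n)ᶜ.indicator fun y => (1 + |y|)⁻¹
  have hw_meas : AEStronglyMeasurable w volume :=
    (((measurable_const.add measurable_abs).inv.indicator
      measurableSet_Icc.compl).const_smul _).aestronglyMeasurable
  have hv_le : eLpNorm v p volume ≤ eLpNorm u p volume :=
    (eLpNorm_congr_ae hv).trans_le (eLpNorm_indicator_le _)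
  have hpt : ∀ᵐ x, ‖(M (S v) : ℝ → ℂ) x‖ₑ ≤
      ‖(m + 2 : ℝ)‖ₑ * tailNorm q n * eLpNorm u p volume *
        ‖(Icc (-(m : ℝ)) m).indicator (fun _ => (1 : ℝ)) x‖ₑ := by
    filter_upwards [hM.coeFn_eq_indicator (S v), hSv] with x hx hSx
    rw [hx]
    by_cases hxm : x ∈ Icc (-(m : ℝ)) m
    · rw [indicator_of_mem hxm, indicator_of_mem hxm, hSx hxm, enorm_one, mul_one]
      calc ‖cauchySingularIntegral v x‖ₑ ≤ eLpNorm v p volume * eLpNorm w q volume := by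
            refine enorm_cauchySingularIntegral_le (Lp.aestronglyMeasurable v) hw_meas ?_
            filter_upwards [hv] with y hy hy0
            have hyn : y ∈ (Icc (-(n : ℝ)) n)ᶜ := by
              by_contra h
              simp [hy, h] at hy0
            simp only [w, Pi.smul_apply, indicator_of_mem hyn, smul_eq_mul]
            exact inv_abs_sub_le (Nat.cast_nonneg m) (abs_le.2 hxm)
              (hmn'.trans (lt_abs_of_notMem_Icc hyn).le)
        _ ≤ eLpNorm u p volume * (‖(m + 2 : ℝ)‖ₑ * tailNorm q n) := by
            rw [eLpNorm_const_smul]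
            exact mul_le_mul' hv_le le_rfl
        _ = _ := by ring
    · simp [indicator_of_notMem hxm]
  calc eLpNorm (M (S v) : ℝ → ℂ) p volume
      ≤ ‖(m + 2 : ℝ)‖ₑ * tailNorm q n * eLpNorm u p volume *
          eLpNorm ((Icc (-(m : ℝ)) m).indicator (fun _ => (1 : ℝ))) p volume :=
        eLpNorm_le_mul_eLpNorm_of_ae_le_mul'' p
          (measurable_const.indicator measurableSet_Icc).aestronglyMeasurable hpt
    _ ≤ ‖(m + 2 : ℝ)‖ₑ * tailNorm q n * eLpNorm u p volume *
          (‖(1 : ℝ)‖ₑ * volume (Icc (-(m : ℝ)) m) ^ (1 / p.toReal)) := by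
        gcongr
        exact eLpNorm_indicator_const_le _ _
    _ = _ := by rw [enorm_one, one_mul]; ring

theorem eLpNorm_Q_S_P_apply_le (hS : IsCauchySingularOffSupport p S)
    (hM : IsMulOp p ((Icc (-(m : ℝ)) m).indicator fun _ => 1) M)
    (hN : IsMulOp p ((Icc (-(n : ℝ)) n).indicator fun _ => 1) N) (hmn : m + 1 ≤ n)
    (u : LpSp p) :
    eLpNorm ((1 - N) (S (M u)) : ℝ → ℂ) p volume ≤
      ‖(m + 2 : ℝ)‖ₑ * volume (Icc (-(m : ℝ)) m) ^ (1 / q.toReal) * tailNorm p n *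
        eLpNorm u p volume := by
  have hmn' : (m : ℝ) + 1 ≤ n := by exact_mod_cast hmn
  set v := M u
  have hv : (v : ℝ → ℂ) =ᵐ[volume] (Icc (-(m : ℝ)) m).indicator u := hM.coeFn_eq_indicator u
  have hv_out : (v : ℝ → ℂ) =ᵐ[volume.restrict (Icc (-(m : ℝ)) m)ᶜ] 0 :=
    EventuallyEq.trans (ae_restrict_of_ae hv) (indicator_ae_eq_restrict_compl measurableSet_Icc)
  have hSv : ∀ᵐ x, x ∈ (Icc (-(n : ℝ)) n)ᶜ →
      (S v : ℝ → ℂ) x = cauchySingularIntegral v x := by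
    filter_upwards [(ae_restrict_iff' measurableSet_Icc.compl).1
      (hS v _ isClosed_Icc.isOpen_compl hv_out)] with x hx hxn
    exact hx (compl_subset_compl.2 (Icc_subset_Icc (by linarith) (by linarith)) hxn)
  have hv_le : eLpNorm v p volume ≤ eLpNorm u p volume :=
    (eLpNorm_congr_ae hv).trans_le (eLpNorm_indicator_le _)
  have hpt : ∀ᵐ x, ‖((1 - N) (S v) : ℝ → ℂ) x‖ₑ ≤
      ‖(m + 2 : ℝ)‖ₑ * volume (Icc (-(m : ℝ)) m) ^ (1 / q.toReal) * eLpNorm u p volume *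
        ‖(Icc (-(n : ℝ)) n)ᶜ.indicator (fun y => (1 + |y|)⁻¹) x‖ₑ := by
    filter_upwards [hN.coeFn_one_sub_eq_indicator (S v), hSv] with x hx hSx
    rw [hx]
    by_cases hxn : x ∈ (Icc (-(n : ℝ)) n)ᶜ
    · rw [indicator_of_mem hxn, indicator_of_mem hxn, hSx hxn]
      calc ‖cauchySingularIntegral v x‖ₑ
          ≤ eLpNorm v p volume * eLpNorm ((Icc (-(m : ℝ)) m).indicator
              fun _ => (m + 2 : ℝ) * (1 + |x|)⁻¹) q volume := by
            refine enorm_cauchySingularIntegral_le (Lp.aestronglyMeasurable v)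
              (measurable_const.indicator measurableSet_Icc).aestronglyMeasurable ?_
            filter_upwards [hv] with y hy hy0
            have hym : y ∈ Icc (-(m : ℝ)) m := by
              by_contra h
              simp [hy, h] at hy0
            rw [indicator_of_mem hym, abs_sub_comm]
            exact inv_abs_sub_le (Nat.cast_nonneg m) (abs_le.2 hym)
              (hmn'.trans (lt_abs_of_notMem_Icc hxn).le)
        _ ≤ eLpNorm u p volume * (‖(m + 2 : ℝ) * (1 + |x|)⁻¹‖ₑ *
              volume (Icc (-(m : ℝ)) m) ^ (1 / q.toReal)) :=
            mul_le_mul' hv_le (eLpNorm_indicator_const_le _ _)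
        _ = _ := by rw [enorm_mul]; ring
    · simp [indicator_of_notMem hxn]
  calc eLpNorm ((1 - N) (S v) : ℝ → ℂ) p volume
      ≤ ‖(m + 2 : ℝ)‖ₑ * volume (Icc (-(m : ℝ)) m) ^ (1 / q.toReal) * eLpNorm u p volume *
          tailNorm p n :=
        eLpNorm_le_mul_eLpNorm_of_ae_le_mul'' p
          ((measurable_const.add measurable_abs).inv.indicator
            measurableSet_Icc.compl).aestronglyMeasurable hpt
    _ = _ := by ring

end Cutoffs

theorem ENNReal.one_lt_conjExponent {p : ℝ≥0∞} (hp : p ≠ ∞) : 1 < p.conjExponent := by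
  rw [ENNReal.conjExponent]
  exact ENNReal.lt_add_right ENNReal.one_ne_top
    (ENNReal.inv_ne_zero.2 (ENNReal.sub_ne_top hp))

theorem ENNReal.conjExponent_ne_top {p : ℝ≥0∞} (hp : 1 < p) : p.conjExponent ≠ ∞ := by
  rw [ENNReal.conjExponent]
  exact ENNReal.add_ne_top.2 ⟨ENNReal.one_ne_top, ENNReal.inv_ne_top.2 (tsub_pos_of_lt hp).ne'⟩

section Tendsto

variable {p : ℝ≥0∞} [Fact (1 ≤ p)] {S : OpSp p} {P : ℕ → OpSp p}

theorem tendsto_norm_P_S_Q (hS : IsCauchySingularOffSupport p S)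
    (hP : ∀ n : ℕ, IsMulOp p ((Icc (-(n : ℝ)) n).indicator fun _ => 1) (P n))
    (hp : 1 < p) (hp_top : p ≠ ∞) (m : ℕ) :
    Tendsto (fun n => ‖P m * S * (1 - P n)‖) atTop (𝓝 0) := by
  have hC : ‖(m + 2 : ℝ)‖ₑ * volume (Icc (-(m : ℝ)) m) ^ (1 / p.toReal) ≠ ∞ :=
    ENNReal.mul_ne_top enorm_ne_top
      (ENNReal.rpow_ne_top_of_nonneg (by positivity) (by simp [Real.volume_Icc]))
  refine tendsto_opNorm_zero_of_eLpNorm_le ?_ ((eventually_ge_atTop (m + 1)).mono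
    fun n hn u => eLpNorm_P_S_Q_apply_le (q := p.conjExponent) hS (hP m) (hP n) hn u)
  simpa using ENNReal.Tendsto.const_mul (tendsto_tailNorm (ENNReal.one_lt_conjExponent hp_top)
    (ENNReal.conjExponent_ne_top hp)) (Or.inr hC)

theorem tendsto_norm_Q_S_P (hS : IsCauchySingularOffSupport p S)
    (hP : ∀ n : ℕ, IsMulOp p ((Icc (-(n : ℝ)) n).indicator fun _ => 1) (P n))
    (hp : 1 < p) (hp_top : p ≠ ∞) (m : ℕ) :
    Tendsto (fun n => ‖(1 - P n) * S * P m‖) atTop (𝓝 0) := by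
  have hC : ‖(m + 2 : ℝ)‖ₑ * volume (Icc (-(m : ℝ)) m) ^ (1 / p.conjExponent.toReal) ≠ ∞ :=
    ENNReal.mul_ne_top enorm_ne_top
      (ENNReal.rpow_ne_top_of_nonneg (by positivity) (by simp [Real.volume_Icc]))
  refine tendsto_opNorm_zero_of_eLpNorm_le ?_ ((eventually_ge_atTop (m + 1)).mono
    fun n hn u => eLpNorm_Q_S_P_apply_le (q := p.conjExponent) hS (hP m) (hP n) hn u)
  simpa using ENNReal.Tendsto.const_mul (tendsto_tailNorm hp hp_top) (Or.inr hC)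

end Tendsto

/-- if `S` is a bounded operator on `L^p(ℝ)`, `1 < p < ∞`, acting as the Cauchy
singular integral `(S u)(x) = (1/(πi)) ∫ u(y)/(y-x) dy` a.e. on any open set where `u` vanishes
a.e., then `‖P_m S Q_n‖ → 0` and `‖Q_n S P_m‖ → 0` as `n → ∞`, for every `m`; i.e. `S` belongs
to `L(L^p(ℝ), P)`. -/
theorem stmt_6 (p : ℝ≥0∞) [Fact (1 ≤ p)] (hp1 : 1 < p) (hp2 : p ≠ ⊤)
    (S : OpSp p)
    (hS : ∀ (u : LpSp p) (V : Set ℝ), IsOpen V →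
      ((u : ℝ → ℂ) =ᵐ[volume.restrict V] 0) →
      (∀ᵐ x ∂(volume.restrict V),
        (S u : ℝ → ℂ) x = (1 / ((Real.pi : ℂ) * Complex.I)) *
          ∫ y : ℝ, (u : ℝ → ℂ) y / ((y : ℂ) - (x : ℂ))))
    (P : ℕ → OpSp p)
    (hP : ∀ n : ℕ, IsMulOp p (Set.indicator (Set.Icc (-(n : ℝ)) (n : ℝ)) fun _ => (1 : ℂ)) (P n)) :
    ∀ m : ℕ,
      Tendsto (fun n : ℕ => ‖P m * S * (1 - P n)‖) atTop (𝓝 0) ∧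
      Tendsto (fun n : ℕ => ‖(1 - P n) * S * P m‖) atTop (𝓝 0) :=
  fun m => ⟨tendsto_norm_P_S_Q hS hP hp1 hp2 m, tendsto_norm_Q_S_P hS hP hp1 hp2 m⟩
end
end

section
/- Let a : ℝ → ℂ be a bounded function which is slowly oscillating at infinity, i.e. for every r ∈ (0,1) one has osc(a, [−x, −rx] ∪ [rx, x]) → 0 as x → +∞. Let (l_n) be a sequence of positive real numbers with l_n → +∞, and suppose x_0 ∈ ℝ ∖ {0} and a_0 ∈ ℂ are such that a(l_n x_0) → a_0 as n → ∞. Then for all real numbers 0 < r ≤ R, sup{ |a(l_n x) − a_0| : x ∈ ℝ, r ≤ |x| ≤ R } → 0 as n → ∞. -/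
open Filter Topology

/-! Fix `0 < m ≤ M` with `x₀` and the annulus `r ≤ |x| ≤ R` inside `m ≤ |x| ≤ M`. For `ρ = m / (2M)`,
the dilation by `l n` maps `m ≤ |x| ≤ M` into `[-X, -ρX] ∪ [ρX, X]` with `X = l n * M → ∞`, where the
oscillation of `a` tends to `0`. Hence `a (l n * x)` is eventually uniformly close to `a (l n * x₀)`,
which tends to `a₀`. -/

/-- `osc(a, [-x, -rx] ∪ [rx, x]) → 0` as `x → ∞`, for every `0 < r < 1`. -/
def SlowlyOscillating {E : Type*} [SeminormedAddCommGroup E] (a : ℝ → E) : Prop :=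
  ∀ r : ℝ, 0 < r → r < 1 → ∀ ε : ℝ, 0 < ε → ∀ᶠ x : ℝ in atTop,
    ∀ s ∈ Set.Icc (-x) (-(r * x)) ∪ Set.Icc (r * x) x,
    ∀ t ∈ Set.Icc (-x) (-(r * x)) ∪ Set.Icc (r * x) x, ‖a t - a s‖ ≤ ε

lemma mem_Icc_neg_union_Icc_of_le_abs {c X y : ℝ} (hc : c ≤ |y|) (hX : |y| ≤ X) :
    y ∈ Set.Icc (-X) (-c) ∪ Set.Icc c X := by
  rcases le_or_gt 0 y with hy | hy
  · rw [abs_of_nonneg hy] at hc hX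
    exact Or.inr ⟨hc, hX⟩
  · rw [abs_of_neg hy] at hc hX
    exact Or.inl ⟨by linarith, by linarith⟩

lemma SlowlyOscillating.eventually_norm_comp_mul_sub_le {E ι : Type*} [SeminormedAddCommGroup E]
    {a : ℝ → E} (ha : SlowlyOscillating a) {L : Filter ι} {l : ι → ℝ}
    (hl : Tendsto l L atTop) {m M : ℝ} (hm : 0 < m) (hmM : m ≤ M) {ε : ℝ} (hε : 0 < ε) :
    ∀ᶠ n in L, ∀ x y : ℝ, m ≤ |x| → |x| ≤ M → m ≤ |y| → |y| ≤ M →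
      ‖a (l n * x) - a (l n * y)‖ ≤ ε := by
  have hM : 0 < M := hm.trans_le hmM
  set ρ := m / (2 * M)
  have hρ : 0 < ρ := by positivity
  have hρ_lt_one : ρ < 1 := by rw [div_lt_one (by positivity)]; linarith
  have hscaled : Tendsto (fun n => l n * M) L atTop := hl.atTop_mul_const hM
  filter_upwards [hscaled.eventually (ha ρ hρ hρ_lt_one ε hε), hl.eventually_gt_atTop 0]
    with n hosc hln x y hx hxM hy hyM
  have hmem : ∀ z : ℝ, m ≤ |z| → |z| ≤ M →
      l n * z ∈ Set.Icc (-(l n * M)) (-(ρ * (l n * M))) ∪ Set.Icc (ρ * (l n * M)) (l n * M) := by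
    intro z hz hzM
    have hρM : ρ * M ≤ m := by
      rw [div_mul_eq_mul_div, div_le_iff₀ (by positivity)]; nlinarith
    apply mem_Icc_neg_union_Icc_of_le_abs <;> rw [abs_mul, abs_of_pos hln]
    · nlinarith
    · exact mul_le_mul_of_nonneg_left hzM hln.le
  exact hosc _ (hmem y hy hyM) _ (hmem x hx hxM)

theorem stmt_7_general (a : ℝ → ℂ)
    (hso : ∀ r : ℝ, 0 < r → r < 1 → ∀ ε : ℝ, 0 < ε → ∀ᶠ x : ℝ in atTop,
      ∀ s ∈ Set.Icc (-x) (-(r * x)) ∪ Set.Icc (r * x) x,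
      ∀ t ∈ Set.Icc (-x) (-(r * x)) ∪ Set.Icc (r * x) x, ‖a t - a s‖ ≤ ε)
    (l : ℕ → ℝ) (hl : Tendsto l atTop atTop)
    (x₀ : ℝ) (hx₀ : x₀ ≠ 0) (a₀ : ℂ)
    (ha₀ : Tendsto (fun n => a (l n * x₀)) atTop (𝓝 a₀))
    (r R : ℝ) (hr : 0 < r) :
    ∀ ε : ℝ, 0 < ε → ∀ᶠ n : ℕ in atTop,
      ∀ x : ℝ, r ≤ |x| → |x| ≤ R → ‖a (l n * x) - a₀‖ ≤ ε := by
  intro ε hε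
  have hm : 0 < min r |x₀| := lt_min hr (abs_pos.mpr hx₀)
  have hmM : min r |x₀| ≤ max R |x₀| := (min_le_right _ _).trans (le_max_right _ _)
  filter_upwards [SlowlyOscillating.eventually_norm_comp_mul_sub_le hso hl hm hmM (half_pos hε),
    ha₀.eventually (Metric.closedBall_mem_nhds a₀ (half_pos hε))] with n hosc hn x hrx hxR
  calc ‖a (l n * x) - a₀‖ ≤ ‖a (l n * x) - a (l n * x₀)‖ + ‖a (l n * x₀) - a₀‖ :=
        norm_sub_le_norm_sub_add_norm_sub _ _ _
    _ ≤ ε / 2 + ε / 2 :=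
        add_le_add (hosc x x₀ ((min_le_left _ _).trans hrx) (hxR.trans (le_max_left _ _))
          (min_le_right _ _) (le_max_right _ _)) (mem_closedBall_iff_norm.1 hn)
    _ = ε := add_halves ε

/-- if `a : ℝ → ℂ` is bounded and slowly oscillating at infinity, `l n → +∞`,
`l n > 0`, and `a (l n * x₀) → a₀` for some fixed `x₀ ≠ 0`, then `a (l n * x) → a₀`
uniformly on every annulus `{x : r ≤ |x| ≤ R}` with `0 < r ≤ R`.
(Both the slow-oscillation hypothesis `osc(a, [-x,-rx] ∪ [rx,x]) → 0` and the uniform-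
convergence conclusion `sup → 0` are spelled out in `ε`-form.) -/
theorem stmt_7 (a : ℝ → ℂ) (C : ℝ) (hbd : ∀ x : ℝ, ‖a x‖ ≤ C)
    (hso : ∀ r : ℝ, 0 < r → r < 1 → ∀ ε : ℝ, 0 < ε → ∀ᶠ x : ℝ in atTop,
      ∀ s ∈ Set.Icc (-x) (-(r * x)) ∪ Set.Icc (r * x) x,
      ∀ t ∈ Set.Icc (-x) (-(r * x)) ∪ Set.Icc (r * x) x, ‖a t - a s‖ ≤ ε)
    (l : ℕ → ℝ) (hlpos : ∀ n, 0 < l n) (hl : Tendsto l atTop atTop)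
    (x₀ : ℝ) (hx₀ : x₀ ≠ 0) (a₀ : ℂ)
    (ha₀ : Tendsto (fun n => a (l n * x₀)) atTop (𝓝 a₀))
    (r R : ℝ) (hr : 0 < r) (hrR : r ≤ R) :
    ∀ ε : ℝ, 0 < ε → ∀ᶠ n : ℕ in atTop,
      ∀ x : ℝ, r ≤ |x| → |x| ≤ R → ‖a (l n * x) - a₀‖ ≤ ε :=
  stmt_7_general a hso l hl x₀ hx₀ a₀ ha₀ r R hr
end

section
/- Let 1 ≤ p < ∞, let K be a P-compact operator on L^p(ℝ), and let φ : ℝ → ℂ be a bounded measurable function which is continuous at 0. Then ‖K ∘ M_{φ_t} − M_{φ_t} ∘ K‖ → 0 as t → ∞, in the operator norm on L^p(ℝ). -/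
/-!
Write `c = φ 0` and `A_t = M_{φ_t} - c`. Since `c` is a scalar, `[K, M_{φ_t}] = [K, A_t]`, and
splitting `1 = P_n + (1 - P_n)` on either side of `A_t` bounds `‖[K, A_t]‖` by
`‖K‖ (‖P_n A_t‖ + ‖A_t P_n‖) + 2C (‖K (1 - P_n)‖ + ‖(1 - P_n) K‖)`.
The second term is small for large `n` by `P`-compactness. For fixed `n`, `P_n A_t` and `A_t P_n`
are multiplications by `φ(x/t) - φ 0` restricted to `[-n, n]`, which tends to `0` uniformly as
`t → ∞` by continuity of `φ` at `0`; so the first term tends to `0`.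
-/

open MeasureTheory Filter Topology
open scoped ENNReal

noncomputable section

theorem tendsto_zero_of_forall_eventually_le_add {ι α : Type*} {L : Filter ι} [L.NeBot]
    {l : Filter α} {f : α → ℝ} {g : ι → α → ℝ} {h : ι → ℝ} (hf : ∀ a, 0 ≤ f a)
    (hle : ∀ n, ∀ᶠ a in l, f a ≤ g n a + h n) (hg : ∀ n, Tendsto (g n) l (𝓝 0))
    (hh : Tendsto h L (𝓝 0)) : Tendsto f l (𝓝 0) := by
  refine tendsto_order.2 ⟨fun b hb => Eventually.of_forall fun a => hb.trans_le (hf a),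
    fun ε hε => ?_⟩
  obtain ⟨n, hn⟩ := (hh.eventually (gt_mem_nhds (half_pos hε))).exists
  filter_upwards [hle n, (hg n).eventually (gt_mem_nhds (half_pos hε))] with a hfa hga
  linarith

theorem norm_mul_sub_mul_le {R : Type*} [NormedRing R] (K A P : R) :
    ‖K * A - A * K‖ ≤ ‖K‖ * (‖P * A‖ + ‖A * P‖) + ‖A‖ * (‖K * (1 - P)‖ + ‖(1 - P) * K‖) := by
  have hKA : K * A = K * (P * A) + K * (1 - P) * A := by noncomm_ring
  have hAK : A * K = A * P * K + A * ((1 - P) * K) := by noncomm_ring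
  calc ‖K * A - A * K‖ ≤ ‖K * A‖ + ‖A * K‖ := norm_sub_le _ _
    _ ≤ (‖K‖ * ‖P * A‖ + ‖K * (1 - P)‖ * ‖A‖) + (‖A * P‖ * ‖K‖ + ‖A‖ * ‖(1 - P) * K‖) := by
      rw [hKA, hAK]
      gcongr <;> exact (norm_add_le _ _).trans (add_le_add (norm_mul_le _ _) (norm_mul_le _ _))
    _ = _ := by ring

theorem mul_sub_mul_eq_of_sub_smul_one {R A : Type*} [CommRing R] [Ring A] [Algebra R A]
    (K M : A) (c : R) : K * M - M * K = K * (M - c • 1) - (M - c • 1) * K := by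
  rw [mul_sub, sub_mul, mul_smul_one, smul_one_mul]
  abel

theorem ContinuousAt.tendstoUniformlyOn_comp_div {β : Type*} [PseudoMetricSpace β]
    {φ : ℝ → β} (hφ : ContinuousAt φ 0) (R : ℝ) :
    TendstoUniformlyOn (fun t x => φ (x / t)) (fun _ => φ 0) atTop (Set.Icc (-R) R) := by
  refine Metric.tendstoUniformlyOn_iff.2 fun ε hε => ?_
  obtain ⟨r, hr, hφr⟩ := Metric.continuousAt_iff.1 hφ ε hε
  filter_upwards [eventually_gt_atTop 0, eventually_gt_atTop (|R| / r)] with t ht htR x hx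
  rw [dist_comm]
  refine hφr ?_
  rw [dist_zero_right, Real.norm_eq_abs, abs_div, abs_of_pos ht, div_lt_iff₀ ht]
  rw [div_lt_iff₀ hr] at htR
  linarith [abs_le_abs hx.2 (by linarith [hx.1] : -x ≤ R), le_abs_self R]

theorem TendstoUniformlyOn.tendstoUniformly_indicator_one_mul_sub {ι α E : Type*}
    [NormedRing E] {l : Filter ι} {s : Set α} {F : ι → α → E} {f : α → E}
    (hF : TendstoUniformlyOn F f l s) :
    TendstoUniformly (fun i x => s.indicator (fun _ => (1 : E)) x * (F i x - f x)) 0 l := by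
  refine Metric.tendstoUniformly_iff.2 fun ε hε => ?_
  filter_upwards [Metric.tendstoUniformlyOn_iff.1 hF ε hε] with i hi x
  by_cases hx : x ∈ s
  · simpa [hx, dist_eq_norm, norm_sub_rev] using hi x hx
  · simpa [hx] using hε

section IsMulOp

variable {p : ℝ≥0∞} [Fact (1 ≤ p)]

theorem IsMulOp.norm_le {a : ℝ → ℂ} {N : OpSp p} (hN : IsMulOp p a N) {c : ℝ} (hc : 0 ≤ c)
    (ha : ∀ x, ‖a x‖ ≤ c) : ‖N‖ ≤ c :=
  N.opNorm_le_bound hc fun u => Lp.norm_le_mul_norm_of_ae_le_mul <| by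
    filter_upwards [hN u] with x hx
    rw [hx, norm_mul]
    gcongr
    exact ha x

theorem IsMulOp.mul {a b : ℝ → ℂ} {S T : OpSp p} (hS : IsMulOp p a S) (hT : IsMulOp p b T) :
    IsMulOp p (fun x => a x * b x) (S * T) := fun u => by
  filter_upwards [hS (T u), hT u] with x hSx hTx
  change S (T u) x = _
  rw [hSx, hTx, mul_assoc]

theorem IsMulOp.sub_smul_one {a : ℝ → ℂ} {S : OpSp p} (hS : IsMulOp p a S) (c : ℂ) :
    IsMulOp p (fun x => a x - c) (S - c • 1) := fun u => by
  filter_upwards [Lp.coeFn_sub (S u) (c • u), Lp.coeFn_smul c u, hS u] with x hsub hsmul hSx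
  simp only [sub_apply, smul_apply, one_apply_eq_self, hsub, Pi.sub_apply, hsmul, hSx, Pi.smul_apply, smul_eq_mul]
  ring

theorem tendsto_norm_zero_of_isMulOp {ι : Type*} {l : Filter ι} {a : ι → ℝ → ℂ}
    {N : ι → OpSp p} (hN : ∀ᶠ i in l, IsMulOp p (a i) (N i)) (ha : TendstoUniformly a 0 l) :
    Tendsto (fun i => ‖N i‖) l (𝓝 0) := by
  refine Metric.tendsto_nhds.2 fun ε hε => ?_
  filter_upwards [hN, Metric.tendstoUniformly_iff.1 ha (ε / 2) (half_pos hε)] with i hNi hai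
  rw [dist_zero_right, norm_norm]
  refine (hNi.norm_le (half_pos hε).le fun x => ?_).trans_lt (half_lt_self hε)
  simpa using (hai x).le

end IsMulOp

theorem stmt_14_general (p : ℝ≥0∞) [Fact (1 ≤ p)]
    (P : ℕ → OpSp p)
    (hP : ∀ n : ℕ, IsMulOp p (Set.indicator (Set.Icc (-(n : ℝ)) (n : ℝ)) fun _ => (1 : ℂ)) (P n))
    (K : OpSp p)
    (hK1 : Tendsto (fun n : ℕ => ‖K * (1 - P n)‖) atTop (𝓝 0))
    (hK2 : Tendsto (fun n : ℕ => ‖(1 - P n) * K‖) atTop (𝓝 0))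
    (φ : ℝ → ℂ) (C : ℝ) (hφbd : ∀ x : ℝ, ‖φ x‖ ≤ C)
    (hφ0 : ContinuousAt φ 0)
    (M : ℝ → OpSp p)
    (hM : ∀ t : ℝ, 0 < t → IsMulOp p (fun x => φ (x / t)) (M t)) :
    Tendsto (fun t : ℝ => ‖K * M t - M t * K‖) atTop (𝓝 0) := by
  set A : ℝ → OpSp p := fun t => M t - φ 0 • 1
  have hA : ∀ᶠ t in atTop, IsMulOp p (fun x => φ (x / t) - φ 0) (A t) :=
    (eventually_gt_atTop 0).mono fun t ht => (hM t ht).sub_smul_one (φ 0)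
  have hA_norm : ∀ᶠ t in atTop, ‖A t‖ ≤ C + C := hA.mono fun t hAt =>
    hAt.norm_le (by linarith [norm_nonneg (φ 0), hφbd 0]) fun x =>
      (norm_sub_le _ _).trans (add_le_add (hφbd _) (hφbd 0))
  have hloc (n : ℕ) : TendstoUniformly (fun t x =>
      Set.indicator (Set.Icc (-(n : ℝ)) n) (fun _ => (1 : ℂ)) x * (φ (x / t) - φ 0)) 0 atTop :=
    (hφ0.tendstoUniformlyOn_comp_div n).tendstoUniformly_indicator_one_mul_sub
  have hPA (n : ℕ) : Tendsto (fun t => ‖P n * A t‖) atTop (𝓝 0) :=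
    tendsto_norm_zero_of_isMulOp (hA.mono fun t hAt => (hP n).mul hAt) (hloc n)
  have hAP (n : ℕ) : Tendsto (fun t => ‖A t * P n‖) atTop (𝓝 0) :=
    tendsto_norm_zero_of_isMulOp (hA.mono fun t hAt => by
      simpa only [mul_comm] using hAt.mul (hP n)) (hloc n)
  refine tendsto_zero_of_forall_eventually_le_add (fun _ => norm_nonneg _)
    (g := fun n t => ‖K‖ * (‖P n * A t‖ + ‖A t * P n‖))
    (h := fun n => (C + C) * (‖K * (1 - P n)‖ + ‖(1 - P n) * K‖))
    (fun n => hA_norm.mono fun t hAt => ?_)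
    (fun n => by simpa using ((hPA n).add (hAP n)).const_mul ‖K‖)
    (by simpa using (hK1.add hK2).const_mul (C + C))
  rw [mul_sub_mul_eq_of_sub_smul_one K (M t) (φ 0)]
  refine (norm_mul_sub_mul_le K (A t) (P n)).trans ?_
  gcongr

/-- if `K` is a `P`-compact operator on `L^p(ℝ)`, `1 ≤ p < ∞`, and `φ` is a
bounded measurable function continuous at `0`, then `‖[K, φ_t I]‖ → 0` as `t → ∞`, where
`φ_t = φ(·/t)`. -/
theorem stmt_14 (p : ℝ≥0∞) [Fact (1 ≤ p)] (hp : p ≠ ⊤)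
    (P : ℕ → OpSp p)
    (hP : ∀ n : ℕ, IsMulOp p (Set.indicator (Set.Icc (-(n : ℝ)) (n : ℝ)) fun _ => (1 : ℂ)) (P n))
    (K : OpSp p)
    (hK1 : Tendsto (fun n : ℕ => ‖K * (1 - P n)‖) atTop (𝓝 0))
    (hK2 : Tendsto (fun n : ℕ => ‖(1 - P n) * K‖) atTop (𝓝 0))
    (φ : ℝ → ℂ) (hφm : Measurable φ) (C : ℝ) (hφbd : ∀ x : ℝ, ‖φ x‖ ≤ C)
    (hφ0 : ContinuousAt φ 0)
    (M : ℝ → OpSp p)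
    (hM : ∀ t : ℝ, 0 < t → IsMulOp p (fun x => φ (x / t)) (M t)) :
    Tendsto (fun t : ℝ => ‖K * M t - M t * K‖) atTop (𝓝 0) :=
  stmt_14_general p P hP K hK1 hK2 φ C hφbd hφ0 M hM
end
end
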